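/- Let H = {(z₁,z₂) ∈ ℂ² : Re z₁ > 0, Re z₂ > 0} and let Ω ⊂ ℂ² be an open convex set with 0 ∈ ∂Ω such that the real hyperplanes {Re z_j = 0} support Ω at 0 for j = 1,2 and Ω ⊂ {Re z₁ > 0} ∩ {Re z₂ > 0}, with the additional property that for each j, n·Ω_j → {Re z_j > 0} in the local Hausdorff topology for strongly convex Ω_j ⊃ Ω with smooth boundary tangent to {Re z_j = 0} at 0. Then the dilates n·(Ω₁ ∩ Ω₂) converge in the local Hausdorff topology to H, and ∂H contains a nontrivial complex affine disc (e.g., {(1, it) : |t| < 1} after an affine change translating to the boundary face {Re z₁ = 0}). -/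

import Mathlib

/-!
Each `n • Ω_j` is an open convex set converging to the half-space `{0 < Re z_j}`. An open convex
set `K` whose trace on a ball is Hausdorff-closer than `δ` to the trace of a half-space
`{0 < g}` (`g` 1-Lipschitz) contains every point `y` of the ball shrunk by `δ` with `g y > δ`:
otherwise, moving `y` by `δ` in a direction increasing the functional that separates `y` from
`K` gives a point of the half-space farther from `K` than the Hausdorff distance. So for large
`n` the set `n • (Ω₁ ∩ Ω₂) = n • Ω₁ ∩ n • Ω₂` contains every point of the ball at depth `δ` in
the quadrant `H`, and every point of `H` in the ball is close to such a point. The disc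
`{0} × (1 + 𝔻)` lies in the face `{Re z₁ = 0}` of `∂H`.
-/

open Pointwise

/-- Convergence of sets in `ℂ²` in the local Hausdorff topology. -/
def LocalHausdorffTendsto (A : ℕ → Set (ℂ × ℂ)) (B : Set (ℂ × ℂ)) : Prop :=
  ∀ R : ℝ, 0 < R →
    Filter.Tendsto
      (fun n => Metric.hausdorffDist (closure (A n ∩ Metric.ball 0 R))
        (closure (B ∩ Metric.ball 0 R)))
      Filter.atTop (nhds 0)

open Filter Metric Set

section

variable {E : Type*} [NormedAddCommGroup E] [NormedSpace ℝ E]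

theorem Convex.mem_of_forall_infDist_le {K : Set E} (hKc : Convex ℝ K) (hKo : IsOpen K)
    (hKne : K.Nonempty) {y : E} {r ε : ℝ} (hε : 0 ≤ ε) (hεr : ε < r)
    (h : ∀ z ∈ closedBall y r, infDist z K ≤ ε) : y ∈ K := by
  by_contra hy
  obtain ⟨f, hf⟩ := geometric_hahn_banach_open_point hKc hKo hy
  have hr : 0 < r := hε.trans_lt hεr
  have hf0 : 0 < ‖f‖ := by
    refine norm_pos_iff.2 fun hf0 => ?_
    obtain ⟨a, ha⟩ := hKne
    simpa [hf0] using hf a ha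
  obtain ⟨x, hx, hfx⟩ : ∃ x : E, ‖x‖ < 1 ∧ ε / r * ‖f‖ < f x := by
    obtain ⟨x, hx, hfx⟩ := f.exists_lt_apply_of_lt_opNorm
      (mul_lt_of_lt_one_left hf0 ((div_lt_one hr).2 hεr))
    rcases le_or_gt 0 (f x) with hpos | hneg
    · exact ⟨x, hx, by rwa [Real.norm_of_nonneg hpos] at hfx⟩
    · exact ⟨-x, by rwa [norm_neg], by rwa [map_neg, ← Real.norm_of_nonpos hneg.le]⟩
  set z := y + r • x
  have hz : z ∈ closedBall y r := by
    rw [mem_closedBall, dist_eq_norm, add_sub_cancel_left, norm_smul, Real.norm_of_nonneg hr.le]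
    nlinarith [norm_nonneg x]
  have hfar : r * f x / ‖f‖ ≤ infDist z K := by
    refine (le_infDist hKne).2 fun a ha => ?_
    rw [div_le_iff₀ hf0, dist_eq_norm]
    calc r * f x = f z - f y := by simp [z]
      _ ≤ f (z - a) := by rw [map_sub]; linarith [hf a ha]
      _ ≤ ‖f‖ * ‖z - a‖ := (le_abs_self _).trans (f.le_opNorm _)
      _ = ‖z - a‖ * ‖f‖ := mul_comm _ _
  have hεlt : ε < r * f x / ‖f‖ := by
    rw [lt_div_iff₀ hf0]
    rw [div_mul_eq_mul_div, div_lt_iff₀ hr] at hfx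
    linarith
  exact (hεlt.trans_le hfar).not_ge (h z hz)

theorem Convex.mem_of_hausdorffDist_inter_ball_lt {K : Set E} (hKc : Convex ℝ K)
    (hKo : IsOpen K) (hK0 : (0 : E) ∈ closure K) {g : E → ℝ} (hg : LipschitzWith 1 g) {R δ : ℝ}
    (hd : hausdorffDist (K ∩ ball 0 R) ({p | 0 < g p} ∩ ball 0 R) < δ)
    {y : E} (hy : δ < g y) (hyR : ‖y‖ + δ < R) : y ∈ K := by
  have hδ : 0 ≤ δ := hausdorffDist_nonneg.trans hd.le
  have hK : (K ∩ ball 0 R).Nonempty := by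
    obtain ⟨x, hxK, hx⟩ := mem_closure_iff.1 hK0 R (by linarith [norm_nonneg y])
    exact ⟨x, hxK, by rwa [mem_ball, dist_comm]⟩
  refine hKc.mem_of_forall_infDist_le hKo (hK.mono inter_subset_left) hausdorffDist_nonneg hd
    fun z hz => ?_
  rw [mem_closedBall] at hz
  have hzH : z ∈ {p | 0 < g p} ∩ ball 0 R := by
    refine ⟨?_, ?_⟩
    · show 0 < g z
      have hgz := hg.dist_le_mul z y
      rw [Real.dist_eq, NNReal.coe_one, one_mul] at hgz
      linarith [(abs_le.1 hgz).1]
    · rw [mem_ball_zero_iff]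
      linarith [norm_le_insert' z y, dist_eq_norm z y]
  have hfin : hausdorffEDist ({p | 0 < g p} ∩ ball 0 R) (K ∩ ball 0 R) ≠ ⊤ :=
    hausdorffEDist_ne_top_of_nonempty_of_bounded ⟨z, hzH⟩ hK
      (isBounded_ball.subset inter_subset_right) (isBounded_ball.subset inter_subset_right)
  calc infDist z K
      _ ≤ infDist z (K ∩ ball 0 R) := infDist_le_infDist_of_subset inter_subset_left hK
      _ ≤ infDist z ({p | 0 < g p} ∩ ball 0 R)
          + hausdorffDist ({p | 0 < g p} ∩ ball 0 R) (K ∩ ball 0 R) :=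
        infDist_le_infDist_add_hausdorffDist hfin
      _ = hausdorffDist (K ∩ ball 0 R) ({p | 0 < g p} ∩ ball 0 R) := by
        rw [infDist_zero_of_mem hzH, zero_add, hausdorffDist_comm]

end

theorem LocalHausdorffTendsto.eventually_forall_mem_smul {Ω : Set (ℂ × ℂ)} {g : ℂ × ℂ → ℝ}
    (h : LocalHausdorffTendsto (fun n => (n : ℝ) • Ω) {p | 0 < g p})
    (hΩc : Convex ℝ Ω) (hΩo : IsOpen Ω) (hΩ0 : (0 : ℂ × ℂ) ∈ closure Ω)
    (hg : LipschitzWith 1 g) {R δ : ℝ} (hR : 0 < R) (hδ : 0 < δ) :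
    ∀ᶠ n : ℕ in atTop, ∀ y, δ < g y → ‖y‖ < R → y ∈ (n : ℝ) • Ω := by
  filter_upwards [(h (R + δ) (by positivity)).eventually_lt_const hδ, eventually_gt_atTop 0]
    with n hd hn y hy hyR
  have hn : (n : ℝ) ≠ 0 := by positivity
  refine (hΩc.smul _).mem_of_hausdorffDist_inter_ball_lt (hΩo.smul₀ hn) ?_ hg
    (by rwa [← hausdorffDist_closure]) hy (by linarith)
  rw [closure_smul₀]
  simpa using smul_mem_smul_set (a := (n : ℝ)) hΩ0

theorem localHausdorffTendsto_of_eventually_subset_of_approx {A : ℕ → Set (ℂ × ℂ)}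
    {B : Set (ℂ × ℂ)}
    (hAB : ∀ᶠ n in atTop, A n ⊆ B)
    (hBA : ∀ R > 0, ∀ ε > 0, ∀ᶠ n in atTop,
      ∀ y ∈ B ∩ ball 0 R, ∃ x ∈ A n ∩ ball 0 R, dist y x ≤ ε) :
    LocalHausdorffTendsto A B := by
  intro R hR
  refine Metric.tendsto_nhds.2 fun ε hε => ?_
  filter_upwards [hAB, hBA R hR (ε / 2) (half_pos hε)] with n hsub happrox
  rw [hausdorffDist_closure, Real.dist_0_eq_abs, abs_of_nonneg hausdorffDist_nonneg]
  have hle : hausdorffDist (A n ∩ ball 0 R) (B ∩ ball 0 R) ≤ ε / 2 :=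
    hausdorffDist_le_of_mem_dist (half_pos hε).le
      (fun x hx => ⟨x, ⟨hsub hx.1, hx.2⟩, (dist_self x).trans_le (half_pos hε).le⟩) happrox
  linarith

theorem exists_deep_approx_in_quadrant {R ε : ℝ} (hR : 0 < R) (hε : 0 < ε) :
    ∃ δ > 0, ∀ y : ℂ × ℂ, 0 < y.1.re → 0 < y.2.re → ‖y‖ < R →
      ∃ y' : ℂ × ℂ, δ < y'.1.re ∧ δ < y'.2.re ∧ ‖y'‖ < R ∧ dist y y' ≤ ε := by
  set t := min (ε / (2 * R)) (1 / 2)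
  have ht0 : 0 < t := lt_min (by positivity) one_half_pos
  have ht1 : t ≤ 1 / 2 := min_le_right _ _
  have htε : t * (2 * R) ≤ ε := by
    have := min_le_left (ε / (2 * R)) (1 / 2)
    rwa [le_div_iff₀ (by positivity)] at this
  set p₀ : ℂ × ℂ := (((R / 2 : ℝ) : ℂ), ((R / 2 : ℝ) : ℂ))
  have hp₀ : ‖p₀‖ = R / 2 := by
    simp [p₀, Prod.norm_def, abs_of_pos hR]
  have hre : ∀ z : ℂ, 0 < z.re → t * R / 4 < ((1 - t) • z + t • ((R / 2 : ℝ) : ℂ)).re := by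
    intro z hz
    simp only [Complex.add_re, Complex.smul_re, smul_eq_mul, Complex.ofReal_re]
    nlinarith
  refine ⟨t * R / 4, by positivity, fun y hy₁ hy₂ hyR => ⟨(1 - t) • y + t • p₀, ?_, ?_, ?_, ?_⟩⟩
  · exact hre _ hy₁
  · exact hre _ hy₂
  · calc ‖(1 - t) • y + t • p₀‖ ≤ (1 - t) * ‖y‖ + t * (R / 2) := by
          refine (norm_add_le _ _).trans_eq ?_
          rw [norm_smul, norm_smul, hp₀, Real.norm_of_nonneg (by linarith),
            Real.norm_of_nonneg ht0.le]
      _ < R := by nlinarith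
  · have : y - ((1 - t) • y + t • p₀) = t • (y - p₀) := by module
    rw [dist_eq_norm, this, norm_smul, Real.norm_of_nonneg ht0.le]
    nlinarith [norm_sub_le y p₀]

theorem add_smul_mem_frontier_quadrant {t : ℂ} (ht : ‖t‖ < 1) :
    ((0 : ℂ), (1 : ℂ)) + t • ((0 : ℂ), (1 : ℂ)) ∈
      frontier {q : ℂ × ℂ | 0 < q.1.re ∧ 0 < q.2.re} := by
  change _ ∈ frontier ({z : ℂ | 0 < z.re} ×ˢ {z : ℂ | 0 < z.re})
  rw [frontier_prod_eq, Complex.closure_setOfPred_lt_re, Complex.frontier_setOfPred_lt_re]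
  right
  simp only [Prod.smul_mk, smul_eq_mul, mul_zero, mul_one, Prod.mk_add_mk, add_zero, mem_prod,
    mem_ofPred_eq, Complex.zero_re, Complex.add_re, Complex.one_re, true_and]
  linarith [neg_abs_le t.re, (Complex.abs_re_le_norm t)]

theorem stmt_14_general (Ω₁ Ω₂ : Set (ℂ × ℂ))
    (h₁open : IsOpen Ω₁) (h₁conv : Convex ℝ Ω₁)
    (h₂open : IsOpen Ω₂) (h₂conv : Convex ℝ Ω₂)
    (h₁0 : (0 : ℂ × ℂ) ∈ frontier Ω₁) (h₂0 : (0 : ℂ × ℂ) ∈ frontier Ω₂)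
    (h₁half : Ω₁ ⊆ {p : ℂ × ℂ | 0 < p.1.re}) (h₂half : Ω₂ ⊆ {p : ℂ × ℂ | 0 < p.2.re})
    (hlim₁ : LocalHausdorffTendsto (fun n => (n : ℝ) • Ω₁) {p : ℂ × ℂ | 0 < p.1.re})
    (hlim₂ : LocalHausdorffTendsto (fun n => (n : ℝ) • Ω₂) {p : ℂ × ℂ | 0 < p.2.re}) :
    LocalHausdorffTendsto (fun n => (n : ℝ) • (Ω₁ ∩ Ω₂))
        {p : ℂ × ℂ | 0 < p.1.re ∧ 0 < p.2.re} ∧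
    ∃ (p v : ℂ × ℂ), v ≠ 0 ∧ ∀ t : ℂ, ‖t‖ < 1 →
      p + t • v ∈ frontier {q : ℂ × ℂ | 0 < q.1.re ∧ 0 < q.2.re} := by
  have hre₁ : LipschitzWith 1 (fun p : ℂ × ℂ => p.1.re) := by
    simpa [Function.comp_def] using (RCLike.lipschitzWith_re (K := ℂ)).comp LipschitzWith.prod_fst
  have hre₂ : LipschitzWith 1 (fun p : ℂ × ℂ => p.2.re) := by
    simpa [Function.comp_def] using (RCLike.lipschitzWith_re (K := ℂ)).comp LipschitzWith.prod_snd
  refine ⟨localHausdorffTendsto_of_eventually_subset_of_approx ?_ fun R hR ε hε => ?_,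
    (0, 1), (0, 1), by simp, fun t ht => add_smul_mem_frontier_quadrant ht⟩
  · filter_upwards [eventually_gt_atTop 0] with n hn
    rintro _ ⟨w, ⟨hw₁, hw₂⟩, rfl⟩
    exact ⟨by simpa using mul_pos (Nat.cast_pos.2 hn) (h₁half hw₁),
      by simpa using mul_pos (Nat.cast_pos.2 hn) (h₂half hw₂)⟩
  obtain ⟨δ, hδ, hdeep⟩ := exists_deep_approx_in_quadrant hR hε
  filter_upwards [hlim₁.eventually_forall_mem_smul h₁conv h₁open (frontier_subset_closure h₁0)
      hre₁ hR hδ,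
    hlim₂.eventually_forall_mem_smul h₂conv h₂open (frontier_subset_closure h₂0) hre₂ hR hδ,
    eventually_gt_atTop 0] with n hn₁ hn₂ hn
  rintro y ⟨⟨hy₁, hy₂⟩, hyR⟩
  obtain ⟨y', hy'₁, hy'₂, hy'R, hyy'⟩ := hdeep y hy₁ hy₂ (mem_ball_zero_iff.1 hyR)
  refine ⟨y', ⟨?_, mem_ball_zero_iff.2 hy'R⟩, hyy'⟩
  rw [Set.smul_set_inter₀ (by positivity)]
  exact ⟨hn₁ y' hy'₁ hy'R, hn₂ y' hy'₂ hy'R⟩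

/-- the blow-up computation of Example 3.6. If `Ω ⊆ Ω₁ ∩ Ω₂` where each
`Ω_j` is a bounded convex domain with `0 ∈ ∂Ω_j`, `Ω_j ⊆ {Re z_j > 0}`, and
`n·Ω_j → {Re z_j > 0}` in the local Hausdorff topology, then
`n·(Ω₁ ∩ Ω₂) → H = {Re z₁ > 0, Re z₂ > 0}` and `∂H` contains a nontrivial complex
affine disc. -/
theorem stmt_14 (Ω Ω₁ Ω₂ : Set (ℂ × ℂ))
    (hΩopen : IsOpen Ω) (hΩconv : Convex ℝ Ω) (hΩne : Ω.Nonempty)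
    (hΩ0 : (0 : ℂ × ℂ) ∈ frontier Ω)
    (hΩH : Ω ⊆ {p : ℂ × ℂ | 0 < p.1.re ∧ 0 < p.2.re})
    (h₁open : IsOpen Ω₁) (h₁conv : Convex ℝ Ω₁) (h₁bd : Bornology.IsBounded Ω₁)
    (h₂open : IsOpen Ω₂) (h₂conv : Convex ℝ Ω₂) (h₂bd : Bornology.IsBounded Ω₂)
    (hsub₁ : Ω ⊆ Ω₁) (hsub₂ : Ω ⊆ Ω₂)
    (h₁0 : (0 : ℂ × ℂ) ∈ frontier Ω₁) (h₂0 : (0 : ℂ × ℂ) ∈ frontier Ω₂)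
    (h₁half : Ω₁ ⊆ {p : ℂ × ℂ | 0 < p.1.re}) (h₂half : Ω₂ ⊆ {p : ℂ × ℂ | 0 < p.2.re})
    (hlim₁ : LocalHausdorffTendsto (fun n => (n : ℝ) • Ω₁) {p : ℂ × ℂ | 0 < p.1.re})
    (hlim₂ : LocalHausdorffTendsto (fun n => (n : ℝ) • Ω₂) {p : ℂ × ℂ | 0 < p.2.re}) :
    LocalHausdorffTendsto (fun n => (n : ℝ) • (Ω₁ ∩ Ω₂))
        {p : ℂ × ℂ | 0 < p.1.re ∧ 0 < p.2.re} ∧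
    ∃ (p v : ℂ × ℂ), v ≠ 0 ∧ ∀ t : ℂ, ‖t‖ < 1 →
      p + t • v ∈ frontier {q : ℂ × ℂ | 0 < q.1.re ∧ 0 < q.2.re} :=
  stmt_14_general Ω₁ Ω₂ h₁open h₁conv h₂open h₂conv h₁0 h₂0 h₁half h₂half hlim₁ hlim₂
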